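/- arXiv:2006.13709 — 2 statements merged into one kernel-verified Lean document; each statement's English description precedes it below -/
import Mathlib

section
/- Let W be a finite-dimensional real vector space, V = ℂ ⊗_ℝ W its complexification, and c : V → V the conjugation, i.e. the ℂ-antilinear involution determined by c(z ⊗ w) = conj(z) ⊗ w. Suppose F ⊆ V is a complex subspace such that V = F ⊕ c(F), let ι : W → V be the map w ↦ 1 ⊗ w, and let L ⊆ W be a full lattice (a discrete additive subgroup whose ℝ-span is all of W). Then the quotient topological additive group V/(F + ι(L)) (the quotient of V by the subgroup generated by F and ι(L), with the quotient topology) is a compact Hausdorff topological group. -/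
open TensorProduct

/-!
The real points `ι(W)` of `V` are fixed by the conjugation, so `ι(W) ∩ F ⊆ F ∩ c(F) = 0`,
and every `v ∈ c(F)` is `(v + c v) - c v ∈ ι(W) + F`; hence `V = ι(W) ⊕ F` as real vector
spaces. The projection `π : V → W` along `F` identifies `F + ι(L)` with `π⁻¹(L)`, which is
closed because `L` is discrete, and `V/π⁻¹(L)` is the continuous image of a compact
fundamental parallelepiped of `L` in `W`.
-/

theorem AddSubgroup.exists_isCompact_forall_exists_sub_mem {E : Type*} [AddCommGroup E]
    [Module ℝ E] [FiniteDimensional ℝ E] [TopologicalSpace E] [IsTopologicalAddGroup E]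
    [ContinuousSMul ℝ E] (L : AddSubgroup E)
    (hL : Submodule.span ℝ (L : Set E) = ⊤) :
    ∃ K : Set E, IsCompact K ∧ ∀ x, ∃ k ∈ K, x - k ∈ L := by
  obtain ⟨s, hsL, hspan, hli⟩ := exists_linearIndependent ℝ (L : Set E)
  let b : Module.Basis s ℝ E := .mk hli (by rw [Subtype.range_coe, hspan, hL])
  have : Finite s := Module.Finite.finite_basis b
  have : Fintype s := .ofFinite s
  have hcont : Continuous b.equivFun.symm :=
    b.equivFun.symm.toLinearMap.continuous_of_finiteDimensional
  refine ⟨b.equivFun.symm '' Set.Icc 0 1, isCompact_Icc.image hcont, fun x => ?_⟩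
  refine ⟨b.equivFun.symm fun i => Int.fract (b.repr x i),
    ⟨_, ⟨fun i => Int.fract_nonneg _, fun i => (Int.fract_lt_one _).le⟩, rfl⟩, ?_⟩
  have hx : x - b.equivFun.symm (fun i => Int.fract (b.repr x i)) =
      ∑ i, ⌊b.repr x i⌋ • b i := by
    nth_rw 1 [← b.sum_repr x]
    simp only [Module.Basis.equivFun_symm_apply, ← Finset.sum_sub_distrib, ← sub_smul,
      Int.self_sub_fract, Int.cast_smul_eq_zsmul]
  rw [hx]
  exact AddSubgroup.sum_mem _ fun i _ => AddSubgroup.zsmul_mem _ (hsL (by simp [b])) _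

theorem AddSubgroup.compactSpace_quotient_comap {V W : Type*} [AddCommGroup V]
    [TopologicalSpace V] [AddCommGroup W] [TopologicalSpace W] (π : V →+ W) (ι : W → V)
    (hι : Continuous ι) (hπι : ∀ w, π (ι w) = w) (L : AddSubgroup W) {K : Set W}
    (hK : IsCompact K) (hKL : ∀ x, ∃ k ∈ K, x - k ∈ L) :
    CompactSpace (V ⧸ L.comap π) := by
  refine ⟨?_⟩
  suffices Set.univ = (QuotientAddGroup.mk ∘ ι) '' K by
    rw [this]; exact hK.image (QuotientAddGroup.continuous_mk.comp hι)
  refine (Set.eq_univ_of_forall fun q => ?_).symm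
  obtain ⟨v, rfl⟩ := QuotientAddGroup.mk_surjective q
  obtain ⟨k, hk, hkL⟩ := hKL (π v)
  refine ⟨k, hk, QuotientAddGroup.eq.mpr ?_⟩
  simpa [hπι, sub_eq_neg_add] using hkL

theorem LinearMap.ker_toAddSubgroup_sup_map_eq_comap {R V W : Type*} [Ring R]
    [AddCommGroup V] [Module R V] [AddCommGroup W] [Module R W]
    (ι : W →ₗ[R] V) (π : V →ₗ[R] W)
    (hπι : ∀ w, π (ι w) = w) (L : AddSubgroup W) :
    (LinearMap.ker π).toAddSubgroup ⊔ L.map ι.toAddMonoidHom =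
      L.comap π.toAddMonoidHom := by
  ext v
  simp only [AddSubgroup.mem_comap, AddSubgroup.mem_sup, AddSubgroup.mem_map]
  constructor
  · rintro ⟨a, ha, _, ⟨l, hl, rfl⟩, rfl⟩
    simpa [show π a = 0 from ha, hπι] using hl
  · intro hv
    exact ⟨v - ι (π v), by simp [hπι], ι (π v), ⟨π v, hv, rfl⟩, sub_add_cancel _ _⟩

section Complexification

variable {W : Type*} [AddCommGroup W] [Module ℝ W]
  {c : (ℂ ⊗[ℝ] W) →ₗ[ℝ] (ℂ ⊗[ℝ] W)}

theorem conj_conj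
    (hc : ∀ (z : ℂ) (w : W), c (z ⊗ₜ[ℝ] w) = (starRingEnd ℂ z) ⊗ₜ[ℝ] w)
    (v : ℂ ⊗[ℝ] W) : c (c v) = v := by
  induction v using TensorProduct.induction_on with
  | zero => simp
  | tmul z w => simp [hc]
  | add x y hx hy => rw [map_add, map_add, hx, hy]

theorem add_conj_mem_range_mk_one
    (hc : ∀ (z : ℂ) (w : W), c (z ⊗ₜ[ℝ] w) = (starRingEnd ℂ z) ⊗ₜ[ℝ] w)
    (v : ℂ ⊗[ℝ] W) :
    v + c v ∈ LinearMap.range (TensorProduct.mk ℝ ℂ W 1) := by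
  induction v using TensorProduct.induction_on with
  | zero => simp
  | tmul z w =>
    refine ⟨(2 * z.re) • w, ?_⟩
    rw [TensorProduct.mk_apply, ← TensorProduct.smul_tmul, hc, ← TensorProduct.add_tmul,
      Complex.add_conj, Complex.real_smul, mul_one]
  | add x y hx hy =>
    rw [map_add, add_add_add_comm]
    exact add_mem hx hy

theorem isCompl_range_mk_one_restrictScalars
    (hc : ∀ (z : ℂ) (w : W), c (z ⊗ₜ[ℝ] w) = (starRingEnd ℂ z) ⊗ₜ[ℝ] w)
    {F cF : Submodule ℂ (ℂ ⊗[ℝ] W)}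
    (hcF : (cF : Set (ℂ ⊗[ℝ] W)) = c '' (F : Set (ℂ ⊗[ℝ] W)))
    (hcompl : IsCompl F cF) :
    IsCompl (LinearMap.range (TensorProduct.mk ℝ ℂ W 1)) (F.restrictScalars ℝ) := by
  have hcFc : ∀ v ∈ cF, c v ∈ F := by
    intro v hv
    obtain ⟨u, hu, rfl⟩ : v ∈ c '' F := hcF ▸ hv
    rwa [conj_conj hc]
  constructor
  · rw [Submodule.disjoint_def]
    rintro _ ⟨w, rfl⟩ hw
    have hfix : c (1 ⊗ₜ[ℝ] w) = 1 ⊗ₜ[ℝ] w := by simp [hc]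
    have hcw : (1 : ℂ) ⊗ₜ[ℝ] w ∈ cF := by
      rw [← SetLike.mem_coe, hcF, ← hfix]
      exact Set.mem_image_of_mem c hw
    exact (Submodule.disjoint_def.mp hcompl.disjoint) _ hw hcw
  · rw [Submodule.codisjoint_iff_exists_add_eq]
    intro v
    obtain ⟨a, b, ha, hb, rfl⟩ := Submodule.codisjoint_iff_exists_add_eq.mp hcompl.codisjoint v
    exact ⟨b + c b, a - c b, add_conj_mem_range_mk_one hc b, sub_mem ha (hcFc b hb),
      by abel⟩

end Complexification

/-- Let `W` be a finite-dimensional real vector space (with its standard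
topology), `V = ℂ ⊗[ℝ] W` its complexification (likewise topologized), and `c : V → V` the
conjugation determined by `c (z ⊗ w) = conj z ⊗ w`.  Suppose `F ⊆ V` is a complex subspace
with `V = F ⊕ c(F)`, let `ι : W → V` be `w ↦ 1 ⊗ w`, and let `L ⊆ W` be a full lattice
(a discrete additive subgroup whose ℝ-span is all of `W`).  Then the quotient topological
additive group `V/(F + ι(L))` (the quotient of `V` by the subgroup generated by `F` and
`ι(L)`, with the quotient topology) is a compact Hausdorff topological group. -/
theorem stmt2 (W : Type*) [AddCommGroup W] [Module ℝ W] [FiniteDimensional ℝ W]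
    [TopologicalSpace W] [IsTopologicalAddGroup W] [ContinuousSMul ℝ W] [T2Space W]
    [TopologicalSpace (ℂ ⊗[ℝ] W)] [IsTopologicalAddGroup (ℂ ⊗[ℝ] W)]
    [ContinuousSMul ℝ (ℂ ⊗[ℝ] W)] [T2Space (ℂ ⊗[ℝ] W)]
    (c : (ℂ ⊗[ℝ] W) →ₗ[ℝ] (ℂ ⊗[ℝ] W))
    (hc : ∀ (z : ℂ) (w : W), c (z ⊗ₜ[ℝ] w) = (starRingEnd ℂ z) ⊗ₜ[ℝ] w)
    (F cF : Submodule ℂ (ℂ ⊗[ℝ] W))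
    (hcF : (cF : Set (ℂ ⊗[ℝ] W)) = c '' (F : Set (ℂ ⊗[ℝ] W)))
    (hcompl : IsCompl F cF)
    (L : AddSubgroup W) [DiscreteTopology L]
    (hL : Submodule.span ℝ (L : Set W) = ⊤)
    -- `S` is the subgroup `F + ι(L)` of `V` generated by `F` and `ι(L)`
    (S : AddSubgroup (ℂ ⊗[ℝ] W))
    (hS : S = (F.restrictScalars ℝ).toAddSubgroup ⊔
      AddSubgroup.map ((TensorProduct.mk ℝ ℂ W) 1).toAddMonoidHom L) :
    CompactSpace ((ℂ ⊗[ℝ] W) ⧸ S) ∧ T2Space ((ℂ ⊗[ℝ] W) ⧸ S) ∧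
      IsTopologicalAddGroup ((ℂ ⊗[ℝ] W) ⧸ S) := by
  set ι := TensorProduct.mk ℝ ℂ W 1
  have hι : Function.Injective ι := Module.Flat.tensorProduct_mk_injective ℝ W ℂ
  have hsplit := isCompl_range_mk_one_restrictScalars hc hcF hcompl
  set π := LinearMap.linearProjOfIsCompl _ ι hι hsplit
  have hπι : ∀ w, π (ι w) = w := LinearMap.linearProjOfIsCompl_apply_left _ ι hι hsplit
  have hSπ : S = L.comap π.toAddMonoidHom := by
    rw [hS, ← LinearMap.ker_toAddSubgroup_sup_map_eq_comap ι π hπι,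
      LinearMap.ker_linearProjOfIsCompl]
  have : FiniteDimensional ℝ (ℂ ⊗[ℝ] W) := Module.Finite.tensorProduct ℝ ℂ W
  have : IsClosed (S : Set (ℂ ⊗[ℝ] W)) := hSπ ▸
    AddSubgroup.isClosed_of_discrete.preimage π.continuous_of_finiteDimensional
  refine ⟨?_, inferInstance, inferInstance⟩
  obtain ⟨K, hK, hKL⟩ := L.exists_isCompact_forall_exists_sub_mem hL
  subst hSπ
  exact AddSubgroup.compactSpace_quotient_comap π.toAddMonoidHom ι
    ι.continuous_of_finiteDimensional hπι L hK hKL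
end

section
/- Let W be a finite-dimensional real vector space, V = ℂ ⊗_ℝ W its complexification, and c : V → V the conjugation, i.e. the ℂ-antilinear involution determined by c(z ⊗ w) = conj(z) ⊗ w. Suppose F ⊆ V is a complex subspace such that V = F ⊕ c(F). Let H_ℝ ⊆ W be a real subspace and let H = ℂ ⊗_ℝ H_ℝ ⊆ V be its complexification (a c-stable complex subspace of V). If the ℝ-linear map H_ℝ → H/(F ∩ H) sending h to the class of 1 ⊗ h is bijective, then H = (F ∩ H) ⊕ (c(F) ∩ H) as complex subspaces; that is, the subspace F ∩ H defines a pure Hodge structure of weight −1 on H_ℝ. -/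
open TensorProduct

/-- The inclusion `ι : W → ℂ ⊗[ℝ] W`, `w ↦ 1 ⊗ w`. -/
noncomputable def incl (W : Type*) [AddCommGroup W] [Module ℝ W] :
    W →ₗ[ℝ] ℂ ⊗[ℝ] W :=
  (TensorProduct.mk ℝ ℂ W) 1

/-- The complexification `H = ℂ ⊗[ℝ] H_ℝ` of a real subspace `H_ℝ ⊆ W`, realized as the
complex subspace of `V = ℂ ⊗[ℝ] W` spanned by `ι(H_ℝ)`. -/
noncomputable def cxSub {W : Type*} [AddCommGroup W] [Module ℝ W] (Hr : Submodule ℝ W) :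
    Submodule ℂ (ℂ ⊗[ℝ] W) :=
  Submodule.span ℂ (incl W '' (Hr : Set W))

/-- The ℝ-linear map `H_ℝ → H/(F ∩ H)` sending `h` to the class of `1 ⊗ h` modulo
`F ∩ H` (with `H = ℂ ⊗[ℝ] H_ℝ ⊆ V` and `F ∩ H` viewed as a subspace of `H`). -/
noncomputable def toHQuot {W : Type*} [AddCommGroup W] [Module ℝ W] (Hr : Submodule ℝ W)
    (F : Submodule ℂ (ℂ ⊗[ℝ] W)) (h : Hr) :
    (cxSub Hr) ⧸ ((F ⊓ cxSub Hr).comap (cxSub Hr).subtype) :=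
  Submodule.Quotient.mk
    ⟨incl W h.1, Submodule.subset_span (Set.mem_image_of_mem _ h.2)⟩

/-!
For `h ∈ H_ℝ`, surjectivity gives `h' ∈ H_ℝ` with `g = 1 ⊗ h' - i ⊗ h ∈ F ∩ H`. Then
`c g = 1 ⊗ h' + i ⊗ h ∈ c(F) ∩ H`, so `1 ⊗ h = (2i)⁻¹ (c g - g) ∈ F ∩ H + c(F) ∩ H`. As the
`1 ⊗ h` span `H`, this gives `H = F ∩ H + c(F) ∩ H`; the sum is direct since `F ∩ c(F) = 0`.
-/

section Conjugation

variable {W : Type*} [AddCommGroup W] [Module ℝ W] {c : (ℂ ⊗[ℝ] W) →ₗ[ℝ] (ℂ ⊗[ℝ] W)}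

lemma conj_smul (hc : ∀ (z : ℂ) (w : W), c (z ⊗ₜ[ℝ] w) = (starRingEnd ℂ z) ⊗ₜ[ℝ] w)
    (z : ℂ) (v : ℂ ⊗[ℝ] W) : c (z • v) = starRingEnd ℂ z • c v := by
  induction v using TensorProduct.induction_on with
  | zero => simp
  | tmul x w => rw [smul_tmul', smul_eq_mul, hc, hc, smul_tmul', smul_eq_mul, map_mul]
  | add x y hx hy => rw [smul_add, map_add, hx, hy, map_add, smul_add]

lemma tmul_mem_cxSub {Hr : Submodule ℝ W} (z : ℂ) {h : W} (hh : h ∈ Hr) :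
    z ⊗ₜ[ℝ] h ∈ cxSub Hr := by
  have hz : z ⊗ₜ[ℝ] h = z • incl W h := by
    rw [incl, TensorProduct.mk_apply, smul_tmul', smul_eq_mul, mul_one]
  rw [hz]
  exact Submodule.smul_mem _ z (Submodule.subset_span (Set.mem_image_of_mem _ hh))

lemma map_mem_cxSub (hc : ∀ (z : ℂ) (w : W), c (z ⊗ₜ[ℝ] w) = (starRingEnd ℂ z) ⊗ₜ[ℝ] w)
    {Hr : Submodule ℝ W} {x : ℂ ⊗[ℝ] W} (hx : x ∈ cxSub Hr) : c x ∈ cxSub Hr := by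
  induction hx using Submodule.span_induction with
  | mem y hy =>
    obtain ⟨h, hh, rfl⟩ := hy
    rw [incl, TensorProduct.mk_apply, hc]
    exact tmul_mem_cxSub _ hh
  | zero => simp
  | add x y _ _ hx hy => rw [map_add]; exact add_mem hx hy
  | smul z x _ hx => rw [conj_smul hc]; exact Submodule.smul_mem _ _ hx

lemma incl_mem_sup_of_surjective
    (hc : ∀ (z : ℂ) (w : W), c (z ⊗ₜ[ℝ] w) = (starRingEnd ℂ z) ⊗ₜ[ℝ] w)
    {F cF : Submodule ℂ (ℂ ⊗[ℝ] W)} (hcF : Set.MapsTo c F cF) {Hr : Submodule ℝ W}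
    (hsurj : Function.Surjective (toHQuot Hr F)) {h : W} (hh : h ∈ Hr) :
    incl W h ∈ (F ⊓ cxSub Hr) ⊔ (cF ⊓ cxSub Hr) := by
  obtain ⟨h', hh'⟩ := hsurj (Submodule.Quotient.mk ⟨Complex.I ⊗ₜ[ℝ] h, tmul_mem_cxSub _ hh⟩)
  rw [toHQuot, Submodule.Quotient.eq, Submodule.mem_comap] at hh'
  set g : ℂ ⊗[ℝ] W := (1 : ℂ) ⊗ₜ[ℝ] (h' : W) - Complex.I ⊗ₜ[ℝ] h
  have hg : g ∈ F ⊓ cxSub Hr := hh'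
  have hcg : c g ∈ cF ⊓ cxSub Hr := ⟨hcF hg.1, map_mem_cxSub hc hg.2⟩
  have hcg_sub : c g - g = (2 * Complex.I) • incl W h := by
    simp only [g, incl, TensorProduct.mk_apply, map_sub, hc, map_one, Complex.conj_I,
      smul_tmul', smul_eq_mul, mul_one, neg_tmul, two_mul, add_tmul]
    abel
  have h2I : (2 * Complex.I) ≠ 0 := mul_ne_zero two_ne_zero Complex.I_ne_zero
  rw [← inv_smul_smul₀ h2I (incl W h), ← hcg_sub]
  exact Submodule.smul_mem _ _ (sub_mem (Submodule.mem_sup_right hcg) (Submodule.mem_sup_left hg))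

end Conjugation

theorem stmt3_general (W : Type*) [AddCommGroup W] [Module ℝ W]
    (c : (ℂ ⊗[ℝ] W) →ₗ[ℝ] (ℂ ⊗[ℝ] W))
    (hc : ∀ (z : ℂ) (w : W), c (z ⊗ₜ[ℝ] w) = (starRingEnd ℂ z) ⊗ₜ[ℝ] w)
    (F cF : Submodule ℂ (ℂ ⊗[ℝ] W))
    (hcF : (cF : Set (ℂ ⊗[ℝ] W)) = c '' (F : Set (ℂ ⊗[ℝ] W)))
    (hcompl : IsCompl F cF)
    (Hr : Submodule ℝ W)
    (hbij : Function.Bijective (toHQuot Hr F)) :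
    (F ⊓ cxSub Hr) ⊓ (cF ⊓ cxSub Hr) = ⊥ ∧
      (F ⊓ cxSub Hr) ⊔ (cF ⊓ cxSub Hr) = cxSub Hr := by
  have hmaps : Set.MapsTo c F cF := hcF ▸ Set.mapsTo_image c F
  refine ⟨(hcompl.disjoint.mono inf_le_left inf_le_left).eq_bot,
    le_antisymm (sup_le inf_le_right inf_le_right) ?_⟩
  refine Submodule.span_le.2 ?_
  rintro _ ⟨h, hh, rfl⟩
  exact incl_mem_sup_of_surjective hc hmaps hbij.2 hh

/-- Let `W` be a finite-dimensional real vector space, `V = ℂ ⊗[ℝ] W` its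
complexification, and `c : V → V` the conjugation determined by `c (z ⊗ w) = conj z ⊗ w`.
Suppose `F ⊆ V` is a complex subspace with `V = F ⊕ c(F)`.  Let `H_ℝ ⊆ W` be a real
subspace and `H = ℂ ⊗[ℝ] H_ℝ ⊆ V` its complexification.  If the ℝ-linear map
`H_ℝ → H/(F ∩ H)`, `h ↦ [1 ⊗ h]`, is bijective, then `H = (F ∩ H) ⊕ (c(F) ∩ H)` as complex
subspaces; that is, `F ∩ H` defines a pure Hodge structure of weight `-1` on `H_ℝ`. -/
theorem stmt3 (W : Type*) [AddCommGroup W] [Module ℝ W] [FiniteDimensional ℝ W]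
    (c : (ℂ ⊗[ℝ] W) →ₗ[ℝ] (ℂ ⊗[ℝ] W))
    (hc : ∀ (z : ℂ) (w : W), c (z ⊗ₜ[ℝ] w) = (starRingEnd ℂ z) ⊗ₜ[ℝ] w)
    (F cF : Submodule ℂ (ℂ ⊗[ℝ] W))
    (hcF : (cF : Set (ℂ ⊗[ℝ] W)) = c '' (F : Set (ℂ ⊗[ℝ] W)))
    (hcompl : IsCompl F cF)
    (Hr : Submodule ℝ W)
    (hbij : Function.Bijective (toHQuot Hr F)) :
    (F ⊓ cxSub Hr) ⊓ (cF ⊓ cxSub Hr) = ⊥ ∧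
      (F ⊓ cxSub Hr) ⊔ (cF ⊓ cxSub Hr) = cxSub Hr :=
  stmt3_general W c hc F cF hcF hcompl Hr hbij
end
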